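/- arXiv:1701.03863 — 2 statements merged into one kernel-verified Lean document; each statement's English description precedes it below -/
import Mathlib

section
/- Fix α > 0 and β with α + β > 0, and positive integers n, p, k with n = p·k. Partition {1,…,n} sequentially into J_1 = {1,…,p}, J_2 = {p+1,…,2p}, …, J_k, with column selectors S_1, …, S_k, and let the random matrix S take value S_i with probability 1/k. Then for A = αI_n + (β/n)·𝟙𝟙ᵀ, E[S(SᵀAS)⁻¹Sᵀ A] = (p/n)·I_n + [pβ/(n²α + npβ)]·𝟙𝟙ᵀ − [pβ/(n²α + npβ)]·blkdiag(𝟙_p𝟙_pᵀ, …, 𝟙_p𝟙_pᵀ), where the block diagonal matrix has k diagonal blocks each equal to the p×p all-ones matrix. -/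
open scoped BigOperators Matrix

noncomputable section

/-- The column selector matrix of an index set `J` of size `p`: its columns are the
standard basis vectors indexed by `J` (in increasing order).  If `J` does not have
cardinality `p` we return the zero matrix (this case never occurs below). -/
def selector {n : ℕ} (p : ℕ) (J : Finset (Fin n)) : Matrix (Fin n) (Fin p) ℝ :=
  if h : J.card = p then
    Matrix.of fun i j => if i = ((J.orderIsoOfFin h j : { x // x ∈ J }) : Fin n) then (1 : ℝ) else 0
  else 0

/-!
For one block `J` with selector `S`, put `c = β / n` and `M = SᵀAS = αI_p + c𝟙𝟙ᵀ`.
Since `SSᵀ = D_J` is the coordinate projection onto `J` and `Sᵀ(I - D_J) = 0`, splitting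
`A = AD_J + A(I - D_J)` gives `SᵀA = MSᵀ + c𝟙_p 1_{Jᶜ}ᵀ`, with `1_J` the indicator vector of `J`.
Hence `S M⁻¹ SᵀA = D_J + c S M⁻¹𝟙_p 1_{Jᶜ}ᵀ = D_J + c/(α + pc) 1_J 1_{Jᶜ}ᵀ`, because `𝟙_p` is an
eigenvector of `M` with eigenvalue `α + pc`. Summed over the blocks of a partition, the `D_J` add
up to `I` and the `1_J 1_{Jᶜ}ᵀ` to `𝟙𝟙ᵀ - blkdiag(𝟙_p𝟙_pᵀ, …)`; dividing by `k` gives the formula.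
-/

open Matrix

namespace Matrix

section AllOnes

variable {K ι : Type*} [Field K] [Fintype ι]

theorem allOnes_mul_allOnes :
    (of fun _ _ => 1 : Matrix ι ι K) * (of fun _ _ => 1)
      = (Fintype.card ι : K) • of fun _ _ => 1 := by
  ext
  simp [mul_apply]

theorem allOnes_mulVec_one : (of fun _ _ => 1 : Matrix ι ι K) *ᵥ 1 = (Fintype.card ι : K) • 1 := by
  ext
  simp [mulVec, dotProduct]

theorem smul_one_add_smul_allOnes_mul_eq_one [DecidableEq ι] {α c : K} (hα : α ≠ 0)
    (hdenom : α + Fintype.card ι * c ≠ 0) :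
    (α • (1 : Matrix ι ι K) + c • of fun _ _ => 1)
      * (α⁻¹ • 1 - (c / (α * (α + Fintype.card ι * c))) • of fun _ _ => 1) = 1 := by
  set d := c / (α * (α + Fintype.card ι * c))
  have hd : c * α⁻¹ - α * d - c * d * Fintype.card ι = 0 := by
    simp only [d]
    field_simp
    linear_combination (-c) * mul_inv_cancel₀ hdenom
  calc _ = (α * α⁻¹) • (1 : Matrix ι ι K)
        + (c * α⁻¹ - α * d - c * d * Fintype.card ι) • (of fun _ _ => 1 : Matrix ι ι K) := by
        simp only [add_mul, mul_sub, smul_mul_smul_comm, Matrix.one_mul, Matrix.mul_one,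
          allOnes_mul_allOnes, smul_smul]
        module
    _ = 1 := by
        rw [mul_inv_cancel₀ hα, hd]
        simp

theorem inv_smul_one_add_smul_allOnes [DecidableEq ι] {α c : K} (hα : α ≠ 0)
    (hdenom : α + Fintype.card ι * c ≠ 0) :
    (α • (1 : Matrix ι ι K) + c • of fun _ _ => 1)⁻¹
      = α⁻¹ • 1 - (c / (α * (α + Fintype.card ι * c))) • of fun _ _ => 1 :=
  inv_eq_right_inv (smul_one_add_smul_allOnes_mul_eq_one hα hdenom)

theorem inv_smul_one_add_smul_allOnes_mulVec_one [DecidableEq ι] {α c : K} (hα : α ≠ 0)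
    (hdenom : α + Fintype.card ι * c ≠ 0) :
    (α • (1 : Matrix ι ι K) + c • of fun _ _ => 1)⁻¹ *ᵥ 1 = (α + Fintype.card ι * c)⁻¹ • 1 := by
  rw [inv_smul_one_add_smul_allOnes hα hdenom, sub_mulVec, smul_mulVec, smul_mulVec, one_mulVec,
    allOnes_mulVec_one, smul_smul, ← sub_smul]
  congr 1
  field_simp
  linear_combination (-1 : K) * mul_inv_cancel₀ hdenom

end AllOnes

section ColumnSelection

variable {K ι m : Type*} [Field K] [DecidableEq m] {e : ι → m}

theorem transpose_submatrix_one_mul_mul_submatrix_one [Fintype m] (A : Matrix m m K) :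
    ((1 : Matrix m m K).submatrix id e)ᵀ * A * (1 : Matrix m m K).submatrix id e
      = A.submatrix e e := by
  ext i j
  simp [mul_apply, one_apply]

theorem submatrix_one_mul_transpose [Fintype ι] (he : Function.Injective e) :
    (1 : Matrix m m K).submatrix id e * ((1 : Matrix m m K).submatrix id e)ᵀ
      = diagonal ((Set.range e).indicator 1) := by
  classical
  ext x y
  rcases em (x ∈ Set.range e) with ⟨i, rfl⟩ | hx
  · simp only [mul_apply, submatrix_apply, transpose_apply, id, one_apply, he.eq_iff, ite_mul,
      one_mul, zero_mul, Finset.sum_ite_eq, Finset.mem_univ, if_true, diagonal_apply]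
    simp [eq_comm]
  · have hx' : ∀ j, x ≠ e j := fun j h => hx ⟨j, h.symm⟩
    simp [mul_apply, one_apply, diagonal_apply, hx, hx']

theorem submatrix_one_mulVec_one [Fintype ι] (he : Function.Injective e) :
    (1 : Matrix m m K).submatrix id e *ᵥ 1 = (Set.range e).indicator 1 := by
  classical
  ext x
  rcases em (x ∈ Set.range e) with ⟨i, rfl⟩ | hx
  · simp [mulVec, dotProduct, one_apply, he.eq_iff]
  · have hx' : ∀ j, x ≠ e j := fun j h => hx ⟨j, h.symm⟩
    simp [mulVec, dotProduct, hx, hx']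

theorem transpose_submatrix_one_mul_smul_one_add_smul_allOnes [Fintype ι] [Fintype m]
    (he : Function.Injective e) (α c : K) :
    ((1 : Matrix m m K).submatrix id e)ᵀ * (α • (1 : Matrix m m K) + c • of fun _ _ => 1)
      = (α • (1 : Matrix m m K) + c • of fun _ _ => 1).submatrix e e
          * ((1 : Matrix m m K).submatrix id e)ᵀ
        + c • vecMulVec 1 ((Set.range e)ᶜ.indicator 1) := by
  classical
  ext j y
  rcases em (y ∈ Set.range e) with ⟨i, rfl⟩ | hy
  · simp [mul_apply, one_apply, he.eq_iff]
  · have hy' : ∀ j, e j ≠ y := fun j h => hy ⟨j, h⟩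
    simp [mul_apply, one_apply, hy, hy']

theorem submatrix_one_mul_inv_mul_transpose_mul [Fintype ι] [DecidableEq ι] [Fintype m]
    (he : Function.Injective e) {α c : K} (hα : α ≠ 0) (hdenom : α + Fintype.card ι * c ≠ 0) :
    (1 : Matrix m m K).submatrix id e
        * (((1 : Matrix m m K).submatrix id e)ᵀ * (α • (1 : Matrix m m K) + c • of fun _ _ => 1)
          * (1 : Matrix m m K).submatrix id e)⁻¹
        * ((1 : Matrix m m K).submatrix id e)ᵀ * (α • (1 : Matrix m m K) + c • of fun _ _ => 1)
      = diagonal ((Set.range e).indicator 1) + (c / (α + Fintype.card ι * c))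
          • vecMulVec ((Set.range e).indicator 1) ((Set.range e)ᶜ.indicator 1) := by
  set S := (1 : Matrix m m K).submatrix id e
  set A := α • (1 : Matrix m m K) + c • of fun _ _ => (1 : K)
  have hM : A.submatrix e e = α • (1 : Matrix ι ι K) + c • of fun _ _ => 1 := by
    ext i j
    simp [A, one_apply, he.eq_iff]
  have hM_inv_mul : (A.submatrix e e)⁻¹ * A.submatrix e e = 1 := by
    rw [hM]
    exact nonsing_inv_mul _
      (isUnit_det_of_right_inverse (smul_one_add_smul_allOnes_mul_eq_one hα hdenom))
  calc S * (Sᵀ * A * S)⁻¹ * Sᵀ * A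
      = S * (A.submatrix e e)⁻¹
          * (A.submatrix e e * Sᵀ + c • vecMulVec 1 ((Set.range e)ᶜ.indicator 1)) := by
        rw [transpose_submatrix_one_mul_mul_submatrix_one, Matrix.mul_assoc _ Sᵀ A,
          transpose_submatrix_one_mul_smul_one_add_smul_allOnes he]
    _ = S * Sᵀ + c • vecMulVec (S *ᵥ ((A.submatrix e e)⁻¹ *ᵥ 1)) ((Set.range e)ᶜ.indicator 1) := by
        rw [Matrix.mul_add, ← Matrix.mul_assoc, Matrix.mul_assoc S, hM_inv_mul, Matrix.mul_one,
          Matrix.mul_smul, mul_vecMulVec, mulVec_mulVec]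
    _ = _ := by
        rw [submatrix_one_mul_transpose he, hM, inv_smul_one_add_smul_allOnes_mulVec_one hα hdenom,
          mulVec_smul, submatrix_one_mulVec_one he, smul_vecMulVec, smul_smul, div_eq_mul_inv]

end ColumnSelection

section Fibers

variable {K m κ : Type*} [Semiring K] [DecidableEq m] [Fintype κ] [DecidableEq κ]

theorem sum_diagonal_indicator_of_fibers (J : κ → Finset m) (b : m → κ)
    (hJ : ∀ i x, x ∈ J i ↔ b x = i) :
    ∑ i, diagonal ((J i : Set m).indicator (1 : m → K)) = 1 := by
  ext x y
  simp [Matrix.sum_apply, diagonal_apply, Set.indicator_apply, hJ, one_apply]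

theorem sum_vecMulVec_indicator_compl_of_fibers (J : κ → Finset m) (b : m → κ)
    (hJ : ∀ i x, x ∈ J i ↔ b x = i) :
    ∑ i, vecMulVec ((J i : Set m).indicator (1 : m → K)) ((J i : Set m)ᶜ.indicator 1)
      = of fun x y => if b x = b y then 0 else 1 := by
  ext x y
  simp only [Matrix.sum_apply, vecMulVec_apply, Set.indicator_apply, Finset.mem_coe,
    Set.mem_compl_iff, hJ, Pi.one_apply, ite_mul, one_mul, zero_mul, Finset.sum_ite_eq,
    Finset.mem_univ, if_true, of_apply, ite_not]
  exact if_congr eq_comm rfl rfl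

end Fibers

end Matrix

theorem selector_eq_submatrix_one {n p : ℕ} {J : Finset (Fin n)} (h : J.card = p) :
    selector p J = (1 : Matrix (Fin n) (Fin n) ℝ).submatrix id (J.orderEmbOfFin h) := by
  ext x j
  simp only [selector, dif_pos h, of_apply, submatrix_apply, id, one_apply,
    Finset.coe_orderIsoOfFin_apply]
  congr

theorem selector_mul_inv_mul_transpose_mul {n p : ℕ} {J : Finset (Fin n)} (h : J.card = p)
    {α c : ℝ} (hα : α ≠ 0) (hdenom : α + p * c ≠ 0) :
    selector p J
        * ((selector p J)ᵀ * (α • (1 : Matrix (Fin n) (Fin n) ℝ) + c • of fun _ _ => 1)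
          * selector p J)⁻¹
        * (selector p J)ᵀ * (α • (1 : Matrix (Fin n) (Fin n) ℝ) + c • of fun _ _ => 1)
      = diagonal ((J : Set (Fin n)).indicator 1) + (c / (α + p * c))
          • vecMulVec ((J : Set (Fin n)).indicator 1) ((J : Set (Fin n))ᶜ.indicator 1) := by
  have := submatrix_one_mul_inv_mul_transpose_mul (J.orderEmbOfFin h).injective hα
    (by rwa [Fintype.card_fin])
  rwa [Fintype.card_fin, Finset.range_orderEmbOfFin, ← selector_eq_submatrix_one h] at this

theorem card_filter_mul_le_and_lt_mul_succ {n p i : ℕ} (h : p * (i + 1) ≤ n) :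
    (Finset.univ.filter fun x : Fin n => p * i ≤ (x : ℕ) ∧ (x : ℕ) < p * (i + 1)).card = p := by
  rw [← Finset.card_map Fin.valEmbedding]
  have : (Finset.univ.filter fun x : Fin n => p * i ≤ (x : ℕ) ∧ (x : ℕ) < p * (i + 1)).map
      Fin.valEmbedding = Finset.Ico (p * i) (p * (i + 1)) := by
    ext y
    simp only [Finset.mem_map, Finset.mem_filter, Finset.mem_univ, true_and,
      Fin.valEmbedding_apply, Finset.mem_Ico]
    constructor
    · rintro ⟨x, hx, rfl⟩
      exact hx
    · intro hy
      exact ⟨⟨y, by omega⟩, hy, rfl⟩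
  rw [this, Nat.card_Ico, mul_add, mul_one, Nat.add_sub_cancel_left]

theorem stmt11_general (α β : ℝ) (hα : 0 < α) (hαβ : 0 < α + β) (n p k : ℕ)
    (hp : 0 < p) (hk : 0 < k) (hnpk : n = p * k)
    (J : Fin k → Finset (Fin n))
    (hJ : ∀ i, J i = Finset.univ.filter (fun x : Fin n => p * (i : ℕ) ≤ (x : ℕ) ∧ (x : ℕ) < p * ((i : ℕ) + 1)))
    (A : Matrix (Fin n) (Fin n) ℝ)
    (hA : A = α • (1 : Matrix (Fin n) (Fin n) ℝ) + (β / n) • Matrix.of (fun _ _ => (1 : ℝ)))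
    (blk : Matrix (Fin n) (Fin n) ℝ)
    (hblk : blk = Matrix.of (fun x y : Fin n => if (x : ℕ) / p = (y : ℕ) / p then (1 : ℝ) else 0)) :
    (k : ℝ)⁻¹ • (∑ i : Fin k,
        selector p (J i) * ((selector p (J i))ᵀ * A * selector p (J i))⁻¹ * (selector p (J i))ᵀ * A)
      = ((p : ℝ) / n) • (1 : Matrix (Fin n) (Fin n) ℝ)
        + ((p : ℝ) * β / ((n : ℝ) ^ 2 * α + (n : ℝ) * p * β)) • Matrix.of (fun _ _ => (1 : ℝ))
        - ((p : ℝ) * β / ((n : ℝ) ^ 2 * α + (n : ℝ) * p * β)) • blk := by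
  subst hA hblk hnpk
  set block : Fin (p * k) → Fin k := fun x => ⟨x / p, Nat.div_lt_of_lt_mul x.isLt⟩
  have hmem : ∀ i x, x ∈ J i ↔ block x = i := by
    intro i x
    rw [hJ, Finset.mem_filter, Fin.ext_iff, Nat.div_eq_iff hp, mul_add, mul_one, mul_comm (i : ℕ) p]
    simp only [Finset.mem_univ, true_and]
    omega
  have hcard : ∀ i, (J i).card = p := fun i =>
    hJ i ▸ card_filter_mul_le_and_lt_mul_succ (Nat.mul_le_mul_left p i.isLt)
  have hk' : (1 : ℝ) ≤ k := by exact_mod_cast hk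
  have hkαβ : 0 < k * α + β := by nlinarith
  have hdenom_eq : α + p * (β / ((p * k : ℕ) : ℝ)) = (k * α + β) / k := by
    push_cast
    field_simp
  have hdenom_ne : α + p * (β / ((p * k : ℕ) : ℝ)) ≠ 0 := by
    rw [hdenom_eq]
    exact (div_pos hkαβ (by linarith)).ne'
  rw [Finset.sum_congr rfl fun i _ => selector_mul_inv_mul_transpose_mul (hcard i) hα.ne' hdenom_ne,
    Finset.sum_add_distrib, ← Finset.smul_sum, sum_diagonal_indicator_of_fibers J block hmem,
    sum_vecMulVec_indicator_compl_of_fibers J block hmem, hdenom_eq]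
  ext x y
  simp only [Nat.cast_mul, Fin.ext_iff, smul_of, Matrix.smul_apply, Matrix.add_apply, of_apply,
    Pi.smul_apply, smul_eq_mul, mul_ite, mul_zero, mul_one, Matrix.sub_apply]
  split_ifs <;> field_simp <;> ring

/-- For `A = αI + (β/n)𝟙𝟙ᵀ` and the sequential partition
`J_1 = {1,…,p}, J_2 = {p+1,…,2p}, …, J_k` of `{1,…,n}` (`n = p·k`), with `S` uniform over
the corresponding column selectors,
`E[S(SᵀAS)⁻¹SᵀA] = (p/n)·I + (pβ/(n²α+npβ))·𝟙𝟙ᵀ − (pβ/(n²α+npβ))·blkdiag(𝟙_p𝟙_pᵀ,…,𝟙_p𝟙_pᵀ)`.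
The block diagonal matrix with `k` all-ones `p×p` diagonal blocks is the matrix whose
`(x,y)` entry is `1` exactly when `⌊x/p⌋ = ⌊y/p⌋`. -/
theorem stmt11 (α β : ℝ) (hα : 0 < α) (hαβ : 0 < α + β) (n p k : ℕ)
    (hn : 0 < n) (hp : 0 < p) (hk : 0 < k) (hnpk : n = p * k)
    (J : Fin k → Finset (Fin n))
    (hJ : ∀ i, J i = Finset.univ.filter (fun x : Fin n => p * (i : ℕ) ≤ (x : ℕ) ∧ (x : ℕ) < p * ((i : ℕ) + 1)))
    (A : Matrix (Fin n) (Fin n) ℝ)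
    (hA : A = α • (1 : Matrix (Fin n) (Fin n) ℝ) + (β / n) • Matrix.of (fun _ _ => (1 : ℝ)))
    (blk : Matrix (Fin n) (Fin n) ℝ)
    (hblk : blk = Matrix.of (fun x y : Fin n => if (x : ℕ) / p = (y : ℕ) / p then (1 : ℝ) else 0)) :
    (k : ℝ)⁻¹ • (∑ i : Fin k,
        selector p (J i) * ((selector p (J i))ᵀ * A * selector p (J i))⁻¹ * (selector p (J i))ᵀ * A)
      = ((p : ℝ) / n) • (1 : Matrix (Fin n) (Fin n) ℝ)
        + ((p : ℝ) * β / ((n : ℝ) ^ 2 * α + (n : ℝ) * p * β)) • Matrix.of (fun _ _ => (1 : ℝ))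
        - ((p : ℝ) * β / ((n : ℝ) ^ 2 * α + (n : ℝ) * p * β)) • blk :=
  stmt11_general α β hα hαβ n p k hp hk hnpk J hJ A hA blk hblk

end
end

section
/- Let M be a random real n×m matrix (distribution given by a probability measure, such that E[M], E[MᵀM], and E[P_M] exist). Then E[P_M] ⪰ E[M] (E[MᵀM])† E[Mᵀ] in the positive semidefinite order, where P_M = M(MᵀM)†Mᵀ is the orthogonal projector onto the column space of M and † denotes the Moore–Penrose pseudoinverse. -/
open scoped BigOperators Matrix
open MeasureTheory

noncomputable section

/-- `B` is the Moore–Penrose pseudoinverse of `A`. -/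
def IsMoorePenrose {m n : ℕ} (A : Matrix (Fin m) (Fin n) ℝ) (B : Matrix (Fin n) (Fin m) ℝ) : Prop :=
  A * B * A = A ∧ B * A * B = B ∧ (A * B)ᵀ = A * B ∧ (B * A)ᵀ = B * A

open Classical in
/-- The Moore–Penrose pseudoinverse (it always exists and is unique). -/
def pinv {m n : ℕ} (A : Matrix (Fin m) (Fin n) ℝ) : Matrix (Fin n) (Fin m) ℝ :=
  if h : ∃ B, IsMoorePenrose A B then h.choose else 0

/-- The orthogonal projector `P_M = M(MᵀM)†Mᵀ` onto the column space of `M`. -/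
def proj {m n : ℕ} (M : Matrix (Fin m) (Fin n) ℝ) : Matrix (Fin m) (Fin m) ℝ :=
  M * pinv (Mᵀ * M) * Mᵀ

/-- Entrywise expectation of a random matrix. -/
def Mexp {Ω : Type*} [MeasurableSpace Ω] (ℙ : Measure Ω) {m n : ℕ}
    (f : Ω → Matrix (Fin m) (Fin n) ℝ) : Matrix (Fin m) (Fin n) ℝ :=
  Matrix.of fun i j => ∫ ω, f ω i j ∂ℙ

/-!
For fixed vectors `x` and `u`, expanding `‖P_M x - M u‖² ≥ 0` with `P_M M = M` and
`P_M = P_Mᵀ = P_M²` gives `2 xᵀ M u - uᵀ (MᵀM) u ≤ xᵀ P_M x`. The bound is linear in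
`(M, MᵀM, P_M)`, so it survives taking expectations, and the choice
`u = E[MᵀM]† E[M]ᵀ x` turns its left side into `xᵀ E[M] E[MᵀM]† E[M]ᵀ x`.
-/

open Matrix

namespace IsMoorePenrose

variable {m n : ℕ} {A : Matrix (Fin m) (Fin n) ℝ} {B C : Matrix (Fin n) (Fin m) ℝ}

theorem unique (hB : IsMoorePenrose A B) (hC : IsMoorePenrose A C) : B = C := by
  obtain ⟨hB1, hB2, hB3, hB4⟩ := hB
  obtain ⟨hC1, hC2, hC3, hC4⟩ := hC
  have hAB : A * B = A * C := by
    calc A * B = (A * C * A * B)ᵀ := by rw [hC1, hB3]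
      _ = (A * B)ᵀ * (A * C)ᵀ := by rw [← transpose_mul, Matrix.mul_assoc]
      _ = A * C := by rw [hB3, hC3, ← Matrix.mul_assoc, hB1]
  have hBA : B * A = C * A := by
    calc B * A = (B * (A * C * A))ᵀ := by rw [hC1, hB4]
      _ = (C * A)ᵀ * (B * A)ᵀ := by rw [← transpose_mul, Matrix.mul_assoc, Matrix.mul_assoc]
      _ = C * A := by rw [hB4, hC4, Matrix.mul_assoc, ← Matrix.mul_assoc A, hB1]
  rw [← hC2, ← hB2, Matrix.mul_assoc, hAB, ← Matrix.mul_assoc, hBA]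

theorem transpose (h : IsMoorePenrose A B) : IsMoorePenrose Aᵀ Bᵀ := by
  obtain ⟨h1, h2, h3, h4⟩ := h
  refine ⟨?_, ?_, ?_, ?_⟩
  · rw [← transpose_mul, ← transpose_mul, ← Matrix.mul_assoc, h1]
  · rw [← transpose_mul, ← transpose_mul, ← Matrix.mul_assoc, h2]
  · rw [← transpose_mul, transpose_transpose, h4]
  · rw [← transpose_mul, transpose_transpose, h3]

theorem mul_mul_transpose {p q : ℕ} (h : IsMoorePenrose A B) {U : Matrix (Fin p) (Fin m) ℝ}
    {V : Matrix (Fin q) (Fin n) ℝ} (hU : Uᵀ * U = 1) (hV : Vᵀ * V = 1) :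
    IsMoorePenrose (U * A * Vᵀ) (V * B * Uᵀ) := by
  obtain ⟨h1, h2, h3, h4⟩ := h
  have hUAB : U * A * Vᵀ * (V * B * Uᵀ) = U * (A * B) * Uᵀ := by
    simp only [Matrix.mul_assoc, ← Matrix.mul_assoc Vᵀ V, hV, Matrix.one_mul]
  have hVBA : V * B * Uᵀ * (U * A * Vᵀ) = V * (B * A) * Vᵀ := by
    simp only [Matrix.mul_assoc, ← Matrix.mul_assoc Uᵀ U, hU, Matrix.one_mul]
  refine ⟨?_, ?_, ?_, ?_⟩
  · rw [hUAB]
    simp only [Matrix.mul_assoc, ← Matrix.mul_assoc Uᵀ U, hU, Matrix.one_mul]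
    rw [← Matrix.mul_assoc B, ← Matrix.mul_assoc A, ← Matrix.mul_assoc A B, h1]
  · rw [hVBA]
    simp only [Matrix.mul_assoc, ← Matrix.mul_assoc Vᵀ V, hV, Matrix.one_mul]
    rw [← Matrix.mul_assoc A, ← Matrix.mul_assoc B, ← Matrix.mul_assoc B A, h2]
  · rw [hUAB, transpose_mul, transpose_mul, transpose_transpose, h3]
    simp only [Matrix.mul_assoc]
  · rw [hVBA, transpose_mul, transpose_mul, transpose_transpose, h4]
    simp only [Matrix.mul_assoc]

end IsMoorePenrose

theorem isMoorePenrose_diagonal {k : ℕ} (d : Fin k → ℝ) :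
    IsMoorePenrose (diagonal d) (diagonal d⁻¹) := by
  refine ⟨?_, ?_, ?_, ?_⟩ <;> simp only [diagonal_mul_diagonal, diagonal_transpose, Pi.inv_apply]
  · simp only [mul_inv_mul_cancel]
  · exact congrArg diagonal <| funext fun i => by
      simpa only [inv_inv, Pi.inv_apply] using mul_inv_mul_cancel (d i)⁻¹

theorem exists_isMoorePenrose_of_isSymm {k : ℕ} {A : Matrix (Fin k) (Fin k) ℝ} (hA : A.IsSymm) :
    ∃ B, IsMoorePenrose A B := by
  have hH : A.IsHermitian := by rwa [IsHermitian, conjTranspose_eq_transpose_of_trivial]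
  set U : Matrix (Fin k) (Fin k) ℝ := (hH.eigenvectorUnitary : Matrix (Fin k) (Fin k) ℝ)
  have hstar : star U = Uᵀ := by rw [star_eq_conjTranspose, conjTranspose_eq_transpose_of_trivial]
  have hUU : Uᵀ * U = 1 := hstar ▸ Unitary.star_mul_self_of_mem hH.eigenvectorUnitary.2
  have hspec : A = U * diagonal (RCLike.ofReal ∘ hH.eigenvalues) * Uᵀ := by
    rw [← hstar]; exact hH.spectral_theorem
  exact ⟨_, hspec ▸ (isMoorePenrose_diagonal _).mul_mul_transpose hUU hUU⟩

theorem isSymm_transpose_mul {m n : ℕ} (M : Matrix (Fin m) (Fin n) ℝ) : (Mᵀ * M).IsSymm := by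
  rw [IsSymm, transpose_mul, transpose_transpose]

theorem isMoorePenrose_pinv_of_isSymm {k : ℕ} {A : Matrix (Fin k) (Fin k) ℝ} (hA : A.IsSymm) :
    IsMoorePenrose A (pinv A) := by
  have h := exists_isMoorePenrose_of_isSymm hA
  rw [pinv, dif_pos h]
  exact h.choose_spec

theorem pinv_isSymm {k : ℕ} {A : Matrix (Fin k) (Fin k) ℝ} (hA : A.IsSymm) : (pinv A).IsSymm := by
  have h := isMoorePenrose_pinv_of_isSymm hA
  have ht := h.transpose
  rw [hA.eq] at ht
  exact ht.unique h

theorem mul_pinv_transpose_mul_self_mul {n m : ℕ} (M : Matrix (Fin n) (Fin m) ℝ) :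
    M * pinv (Mᵀ * M) * (Mᵀ * M) = M := by
  have h1 := (isMoorePenrose_pinv_of_isSymm (isSymm_transpose_mul M)).1
  have h : Mᵀ * M * (pinv (Mᵀ * M) * (Mᵀ * M) - 1) = 0 := by
    rw [Matrix.mul_sub, ← Matrix.mul_assoc, h1, Matrix.mul_one, sub_self]
  rw [← conjTranspose_eq_transpose_of_trivial, conjTranspose_mul_self_mul_eq_zero,
    Matrix.mul_sub, Matrix.mul_one, sub_eq_zero, ← Matrix.mul_assoc] at h
  exact h

theorem proj_mul_self {n m : ℕ} (M : Matrix (Fin n) (Fin m) ℝ) : proj M * M = M := by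
  rw [proj, Matrix.mul_assoc _ Mᵀ, mul_pinv_transpose_mul_self_mul]

theorem proj_isSymm {n m : ℕ} (M : Matrix (Fin n) (Fin m) ℝ) : (proj M).IsSymm := by
  rw [IsSymm, proj, transpose_mul, transpose_mul, transpose_transpose,
    (pinv_isSymm (isSymm_transpose_mul M)).eq, Matrix.mul_assoc]

theorem proj_mul_proj {n m : ℕ} (M : Matrix (Fin n) (Fin m) ℝ) : proj M * proj M = proj M := by
  have h : Mᵀ * proj M = Mᵀ := by
    rw [← (proj_isSymm M).eq, ← transpose_mul, proj_mul_self]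
  nth_rw 1 [proj]
  rw [Matrix.mul_assoc _ Mᵀ, h]
  rfl

theorem two_mul_dotProduct_mulVec_sub_le {ι κ : Type*} [Fintype ι] [Fintype κ]
    {P : Matrix ι ι ℝ} {M : Matrix ι κ ℝ} (hP : P.IsSymm) (hPP : P * P = P) (hPM : P * M = M)
    (x : ι → ℝ) (u : κ → ℝ) :
    2 * (x ⬝ᵥ M *ᵥ u) - u ⬝ᵥ (Mᵀ * M) *ᵥ u ≤ x ⬝ᵥ P *ᵥ x := by
  have hPx : (P *ᵥ x) ⬝ᵥ P *ᵥ x = x ⬝ᵥ P *ᵥ x := by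
    rw [← dotProduct_transpose_mulVec P x (P *ᵥ x), hP.eq, mulVec_mulVec, hPP]
  have hPxMu : (P *ᵥ x) ⬝ᵥ M *ᵥ u = x ⬝ᵥ M *ᵥ u := by
    rw [dotProduct_comm, ← dotProduct_transpose_mulVec P x (M *ᵥ u), hP.eq, mulVec_mulVec, hPM]
  have hMu : (M *ᵥ u) ⬝ᵥ M *ᵥ u = u ⬝ᵥ (Mᵀ * M) *ᵥ u := by
    rw [← dotProduct_transpose_mulVec M u (M *ᵥ u), mulVec_mulVec]
  have hsq : 0 ≤ (P *ᵥ x - M *ᵥ u) ⬝ᵥ (P *ᵥ x - M *ᵥ u) :=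
    Finset.sum_nonneg fun i _ => mul_self_nonneg _
  rw [sub_dotProduct, dotProduct_sub, dotProduct_sub, dotProduct_comm (M *ᵥ u), hPx, hPxMu,
    hMu] at hsq
  linarith

theorem posSemidef_sub_mul_pinv_mul_transpose {n m : ℕ} {Q : Matrix (Fin n) (Fin n) ℝ}
    {E : Matrix (Fin n) (Fin m) ℝ} {S : Matrix (Fin m) (Fin m) ℝ} (hQ : Q.IsSymm) (hS : S.IsSymm)
    (h : ∀ x u, 2 * (x ⬝ᵥ E *ᵥ u) - u ⬝ᵥ S *ᵥ u ≤ x ⬝ᵥ Q *ᵥ x) :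
    (Q - E * pinv S * Eᵀ).PosSemidef := by
  have hG := pinv_isSymm hS
  rw [posSemidef_iff_dotProduct_mulVec]
  constructor
  · rw [IsHermitian, conjTranspose_eq_transpose_of_trivial, transpose_sub, hQ.eq, transpose_mul,
      transpose_mul, transpose_transpose, hG.eq, Matrix.mul_assoc]
  · intro x
    set G := pinv S
    set y := Eᵀ *ᵥ x
    have hEu : x ⬝ᵥ E *ᵥ G *ᵥ y = x ⬝ᵥ (E * G * Eᵀ) *ᵥ x := by
      simp only [y, mulVec_mulVec, Matrix.mul_assoc]
    have hSu : (G *ᵥ y) ⬝ᵥ S *ᵥ G *ᵥ y = x ⬝ᵥ E *ᵥ G *ᵥ y :=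
      calc (G *ᵥ y) ⬝ᵥ S *ᵥ G *ᵥ y = y ⬝ᵥ Gᵀ *ᵥ S *ᵥ G *ᵥ y := by
            rw [dotProduct_comm, dotProduct_transpose_mulVec]
        _ = y ⬝ᵥ G *ᵥ y := by
            rw [hG.eq, mulVec_mulVec, mulVec_mulVec, (isMoorePenrose_pinv_of_isSymm hS).2.1]
        _ = x ⬝ᵥ E *ᵥ G *ᵥ y := by rw [dotProduct_comm, dotProduct_transpose_mulVec]
    rw [star_trivial, sub_mulVec, dotProduct_sub, sub_nonneg, ← hEu]
    linarith [h x (G *ᵥ y)]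

theorem dotProduct_mulVec_eq_sum {ι κ : Type*} [Fintype ι] [Fintype κ] (N : Matrix ι κ ℝ)
    (x : ι → ℝ) (u : κ → ℝ) : x ⬝ᵥ N *ᵥ u = ∑ i, ∑ j, x i * (N i j * u j) := by
  simp only [dotProduct, mulVec, Finset.mul_sum]

section Expectation

variable {Ω : Type*} [MeasurableSpace Ω] (ℙ : Measure Ω)

theorem Mexp_transpose {k l : ℕ} (f : Ω → Matrix (Fin k) (Fin l) ℝ) :
    (Mexp ℙ f)ᵀ = Mexp ℙ fun ω => (f ω)ᵀ :=
  rfl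

theorem Mexp_isSymm {k : ℕ} {f : Ω → Matrix (Fin k) (Fin k) ℝ} (hf : ∀ ω, (f ω).IsSymm) :
    (Mexp ℙ f).IsSymm := by
  rw [IsSymm, Mexp_transpose]
  simp only [hf, IsSymm.eq]

variable {ℙ}

theorem integrable_dotProduct_mulVec {k l : ℕ} {f : Ω → Matrix (Fin k) (Fin l) ℝ}
    (hf : ∀ i j, Integrable (fun ω => f ω i j) ℙ) (x : Fin k → ℝ) (u : Fin l → ℝ) :
    Integrable (fun ω => x ⬝ᵥ f ω *ᵥ u) ℙ := by
  simp only [dotProduct_mulVec_eq_sum]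
  exact integrable_finsetSum _ fun i _ => integrable_finsetSum _ fun j _ =>
    ((hf i j).mul_const (u j)).const_mul (x i)

theorem integral_dotProduct_mulVec {k l : ℕ} {f : Ω → Matrix (Fin k) (Fin l) ℝ}
    (hf : ∀ i j, Integrable (fun ω => f ω i j) ℙ) (x : Fin k → ℝ) (u : Fin l → ℝ) :
    ∫ ω, x ⬝ᵥ f ω *ᵥ u ∂ℙ = x ⬝ᵥ Mexp ℙ f *ᵥ u := by
  simp only [dotProduct_mulVec_eq_sum]
  rw [integral_finsetSum _ fun i _ => integrable_finsetSum _ fun j _ =>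
    ((hf i j).mul_const (u j)).const_mul (x i)]
  refine Finset.sum_congr rfl fun i _ => ?_
  rw [integral_finsetSum _ fun j _ => ((hf i j).mul_const (u j)).const_mul (x i)]
  refine Finset.sum_congr rfl fun j _ => ?_
  rw [integral_const_mul, integral_mul_const, Mexp, of_apply]

end Expectation

theorem stmt14_general {Ω : Type*} [MeasurableSpace Ω] (ℙ : Measure Ω)
    (n m : ℕ) (M : Ω → Matrix (Fin n) (Fin m) ℝ)
    (hMint : ∀ i j, Integrable (fun ω => M ω i j) ℙ)
    (hMtMint : ∀ i j, Integrable (fun ω => ((M ω)ᵀ * M ω) i j) ℙ)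
    (hPint : ∀ i j, Integrable (fun ω => proj (M ω) i j) ℙ) :
    (Mexp ℙ (fun ω => proj (M ω))
      - Mexp ℙ M * pinv (Mexp ℙ (fun ω => (M ω)ᵀ * M ω)) * Mexp ℙ (fun ω => (M ω)ᵀ)).PosSemidef := by
  rw [← Mexp_transpose]
  refine posSemidef_sub_mul_pinv_mul_transpose (Mexp_isSymm ℙ fun ω => proj_isSymm (M ω))
    (Mexp_isSymm ℙ fun ω => isSymm_transpose_mul (M ω)) fun x u => ?_
  have hM := integrable_dotProduct_mulVec hMint x u
  have hMtM := integrable_dotProduct_mulVec hMtMint u u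
  calc 2 * (x ⬝ᵥ Mexp ℙ M *ᵥ u) - u ⬝ᵥ Mexp ℙ (fun ω => (M ω)ᵀ * M ω) *ᵥ u
      = ∫ ω, 2 * (x ⬝ᵥ M ω *ᵥ u) - u ⬝ᵥ ((M ω)ᵀ * M ω) *ᵥ u ∂ℙ := by
        rw [integral_sub (hM.const_mul 2) hMtM, integral_const_mul,
          integral_dotProduct_mulVec hMint, integral_dotProduct_mulVec hMtMint]
    _ ≤ ∫ ω, x ⬝ᵥ proj (M ω) *ᵥ x ∂ℙ :=
        integral_mono ((hM.const_mul 2).sub hMtM) (integrable_dotProduct_mulVec hPint x x)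
          fun ω => two_mul_dotProduct_mulVec_sub_le (proj_isSymm (M ω)) (proj_mul_proj (M ω))
            (proj_mul_self (M ω)) x u
    _ = x ⬝ᵥ Mexp ℙ (fun ω => proj (M ω)) *ᵥ x := integral_dotProduct_mulVec hPint x x

/-- For a random `n×m` real matrix `M` (with the relevant expectations
existing), `E[P_M] ⪰ E[M] (E[MᵀM])† E[Mᵀ]` in the positive semidefinite order. -/
theorem stmt14 {Ω : Type*} [MeasurableSpace Ω] (ℙ : Measure Ω) [IsProbabilityMeasure ℙ]
    (n m : ℕ) (M : Ω → Matrix (Fin n) (Fin m) ℝ)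
    (hMint : ∀ i j, Integrable (fun ω => M ω i j) ℙ)
    (hMtMint : ∀ i j, Integrable (fun ω => ((M ω)ᵀ * M ω) i j) ℙ)
    (hPint : ∀ i j, Integrable (fun ω => proj (M ω) i j) ℙ) :
    (Mexp ℙ (fun ω => proj (M ω))
      - Mexp ℙ M * pinv (Mexp ℙ (fun ω => (M ω)ᵀ * M ω)) * Mexp ℙ (fun ω => (M ω)ᵀ)).PosSemidef :=
  stmt14_general ℙ n m M hMint hMtMint hPint

end
end
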